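/- arXiv:1612.02024 — 5 statements merged into one kernel-verified Lean document; each statement's English description precedes it below -/
import Mathlib

section
/- Suppose 𝒫₁ is indistinguishable from 𝒫₀ in the weak distance: for every Q ∈ 𝒫₁ there exists a sequence {P_k} in 𝒫₀ with P_k →d Q. Then every test φ that is a.s. continuous under every Q ∈ 𝒫₁ has power limited by size: sup_{Q∈𝒫₁} E_Q[φ] ≤ sup_{P∈𝒫₀} E_P[φ]. -/
open MeasureTheory Filter

/-- The distribution of an i.i.d. sample of size `n` from `P`: the `n`-fold product measure. -/
noncomputable def sampleDist (n : ℕ) {E : Type*} [MeasurableSpace E]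
    (P : ProbabilityMeasure E) : Measure (Fin n → E) :=
  Measure.pi fun _ => (P : Measure E)

/-- `E_P[φ]`, the rejection probability of the test `φ` under `P^{⊗n}`. -/
noncomputable def tpower (n : ℕ) {E : Type*} [MeasurableSpace E]
    (P : ProbabilityMeasure E) (φ : (Fin n → E) → ℝ) : ℝ :=
  ∫ z, φ z ∂ sampleDist n P

/-- A test is a measurable function with values in `[0,1]`. -/
def IsTest {E : Type*} [MeasurableSpace E] (φ : E → ℝ) : Prop :=
  Measurable φ ∧ ∀ z, φ z ∈ Set.Icc (0:ℝ) 1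

/-- `φ` is almost-surely continuous under `Q` (i.e. under `Q^{⊗n}`). -/
def ASCont {E : Type*} [MeasurableSpace E] [TopologicalSpace E] (n : ℕ)
    (Q : ProbabilityMeasure E) (φ : (Fin n → E) → ℝ) : Prop :=
  sampleDist n Q {z | ¬ ContinuousAt φ z} = 0

/-- Convergence in distribution: integrals of every bounded continuous function converge. -/
def ConvDM {E : Type*} [MeasurableSpace E] [TopologicalSpace E]
    (P : ℕ → Measure E) (Q : Measure E) : Prop :=
  ∀ g : E → ℝ, Continuous g → (∃ C, ∀ x, |g x| ≤ C) →
    Tendsto (fun k => ∫ x, g x ∂ P k) atTop (nhds (∫ x, g x ∂ Q))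

/-
A weakly convergent sequence `P_k → Q` yields `P_k^{⊗n} → Q^{⊗n}` weakly, and the portmanteau
bound `Q^{⊗n}(G) ≤ liminf P_k^{⊗n}(G)` for open `G` extends to the superlevel sets of `φ`, since
these differ from their interiors only by discontinuity points of `φ`. Applied to `φ` and `1 - φ`
this gives `E_{P_k}[φ] → E_Q[φ]`, so every power `E_Q[φ]` is a limit of sizes `E_{P_k}[φ]`.
-/

open Topology

section AeContinuousMapping

variable {Ω : Type*} [MeasurableSpace Ω]

lemma integrable_of_forall_mem_Icc (μ : Measure Ω) [IsFiniteMeasure μ] {f : Ω → ℝ}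
    (hf_meas : Measurable f) (hf : ∀ x, f x ∈ Set.Icc (0 : ℝ) 1) : Integrable f μ :=
  (integrable_const 1).mono' hf_meas.aestronglyMeasurable
    (.of_forall fun x ↦ by simpa only [Real.norm_of_nonneg (hf x).1] using (hf x).2)

lemma integral_mem_Icc_of_forall_mem_Icc (μ : Measure Ω) [IsProbabilityMeasure μ] {f : Ω → ℝ}
    (hf : ∀ x, f x ∈ Set.Icc (0 : ℝ) 1) : ∫ x, f x ∂μ ∈ Set.Icc (0 : ℝ) 1 :=
  ⟨integral_nonneg fun x ↦ (hf x).1,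
    (integral_mono_of_nonneg (.of_forall fun x ↦ (hf x).1) (integrable_const 1)
      (.of_forall fun x ↦ (hf x).2)).trans_eq (by simp)⟩

variable [TopologicalSpace Ω]

lemma measure_lt_le_liminf_measure_lt_of_ae_continuousAt {μ : Measure Ω} {μs : ℕ → Measure Ω}
    (h_opens : ∀ G, IsOpen G → μ G ≤ atTop.liminf fun k ↦ μs k G)
    {f : Ω → ℝ} (hf : ∀ᵐ x ∂μ, ContinuousAt f x) (t : ℝ) :
    μ {x | t < f x} ≤ atTop.liminf fun k ↦ μs k {x | t < f x} := by
  have h_ae_interior : {x | t < f x} ≤ᵐ[μ] interior {x | t < f x} := by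
    filter_upwards [hf] with x hx hlt
    exact mem_interior_iff_mem_nhds.2 (hx (Ioi_mem_nhds hlt))
  calc μ {x | t < f x} ≤ μ (interior {x | t < f x}) := measure_mono_ae h_ae_interior
    _ ≤ atTop.liminf fun k ↦ μs k (interior {x | t < f x}) := h_opens _ isOpen_interior
    _ ≤ atTop.liminf fun k ↦ μs k {x | t < f x} :=
        liminf_le_liminf (.of_forall fun k ↦ measure_mono interior_subset)

lemma lintegral_le_liminf_lintegral_of_ae_continuousAt {μ : Measure Ω} {μs : ℕ → Measure Ω}
    (h_opens : ∀ G, IsOpen G → μ G ≤ atTop.liminf fun k ↦ μs k G)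
    {f : Ω → ℝ} (hf_meas : Measurable f) (hf_nonneg : 0 ≤ f) (hf : ∀ᵐ x ∂μ, ContinuousAt f x) :
    ∫⁻ x, ENNReal.ofReal (f x) ∂μ ≤ atTop.liminf fun k ↦ ∫⁻ x, ENNReal.ofReal (f x) ∂μs k := by
  simp_rw [lintegral_eq_lintegral_meas_lt _ (.of_forall hf_nonneg) hf_meas.aemeasurable]
  calc ∫⁻ t in Set.Ioi 0, μ {x | t < f x}
      ≤ ∫⁻ t in Set.Ioi 0, atTop.liminf fun k ↦ μs k {x | t < f x} :=
        lintegral_mono (measure_lt_le_liminf_measure_lt_of_ae_continuousAt h_opens hf)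
    _ ≤ atTop.liminf fun k ↦ ∫⁻ t in Set.Ioi 0, μs k {x | t < f x} :=
        lintegral_liminf_le fun k ↦ Antitone.measurable fun _ _ hst ↦
          measure_mono fun _ hx ↦ lt_of_le_of_lt hst hx

variable [OpensMeasurableSpace Ω] [HasOuterApproxClosed Ω]

lemma MeasureTheory.ProbabilityMeasure.eventually_lt_integral_of_ae_continuousAt {μ : ProbabilityMeasure Ω}
    {μs : ℕ → ProbabilityMeasure Ω} (hμs : Tendsto μs atTop (𝓝 μ)) {f : Ω → ℝ}
    (hf_meas : Measurable f) (hf : ∀ x, f x ∈ Set.Icc (0 : ℝ) 1)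
    (hf_cont : ∀ᵐ x ∂(μ : Measure Ω), ContinuousAt f x) {r : ℝ}
    (hr : r < ∫ x, f x ∂(μ : Measure Ω)) :
    ∀ᶠ k in atTop, r < ∫ x, f x ∂(μs k : Measure Ω) := by
  rcases lt_or_ge r 0 with hr_neg | hr_nonneg
  · exact .of_forall fun k ↦ hr_neg.trans_le (integral_mem_Icc_of_forall_mem_Icc _ hf).1
  have h_ofReal : ∀ (ν : Measure Ω) [IsProbabilityMeasure ν],
      ENNReal.ofReal (∫ x, f x ∂ν) = ∫⁻ x, ENNReal.ofReal (f x) ∂ν := fun ν _ ↦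
    ofReal_integral_eq_lintegral_ofReal (integrable_of_forall_mem_Icc ν hf_meas hf)
      (.of_forall fun x ↦ (hf x).1)
  have h_liminf : ENNReal.ofReal r <
      atTop.liminf fun k ↦ ∫⁻ x, ENNReal.ofReal (f x) ∂(μs k : Measure Ω) :=
    calc ENNReal.ofReal r < ENNReal.ofReal (∫ x, f x ∂(μ : Measure Ω)) :=
          ENNReal.ofReal_lt_ofReal_iff'.2 ⟨hr, hr_nonneg.trans_lt hr⟩
      _ = ∫⁻ x, ENNReal.ofReal (f x) ∂(μ : Measure Ω) := h_ofReal μ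
      _ ≤ _ := lintegral_le_liminf_lintegral_of_ae_continuousAt
          (fun _ hG ↦ ProbabilityMeasure.le_liminf_measure_open_of_tendsto hμs hG) hf_meas
          (fun x ↦ (hf x).1) hf_cont
  filter_upwards [eventually_lt_of_lt_liminf h_liminf] with k hk
  rw [← h_ofReal] at hk
  exact (ENNReal.ofReal_lt_ofReal_iff'.1 hk).1

theorem MeasureTheory.ProbabilityMeasure.tendsto_integral_of_ae_continuousAt {μ : ProbabilityMeasure Ω}
    {μs : ℕ → ProbabilityMeasure Ω} (hμs : Tendsto μs atTop (𝓝 μ)) {f : Ω → ℝ}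
    (hf_meas : Measurable f) (hf : ∀ x, f x ∈ Set.Icc (0 : ℝ) 1)
    (hf_cont : ∀ᵐ x ∂(μ : Measure Ω), ContinuousAt f x) :
    Tendsto (fun k ↦ ∫ x, f x ∂(μs k : Measure Ω)) atTop (𝓝 (∫ x, f x ∂(μ : Measure Ω))) := by
  refine tendsto_order.2 ⟨fun r hr ↦ eventually_lt_integral_of_ae_continuousAt hμs hf_meas hf
    hf_cont hr, fun r hr ↦ ?_⟩
  have h_compl : ∀ (ν : Measure Ω) [IsProbabilityMeasure ν],
      ∫ x, (1 - f x) ∂ν = 1 - ∫ x, f x ∂ν := fun ν _ ↦ by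
    simp [integral_sub (integrable_const 1) (integrable_of_forall_mem_Icc ν hf_meas hf)]
  have h_lower := eventually_lt_integral_of_ae_continuousAt hμs (f := fun x ↦ 1 - f x)
    (measurable_const.sub hf_meas) (fun x ↦ ⟨by linarith [(hf x).2], by linarith [(hf x).1]⟩)
    (hf_cont.mono fun _ hx ↦ continuousAt_const.sub hx) (r := 1 - r)
    (by rw [h_compl]; linarith)
  filter_upwards [h_lower] with k hk
  rw [h_compl] at hk
  linarith

end AeContinuousMapping

lemma ConvDM.tendsto {E : Type*} [MeasurableSpace E] [TopologicalSpace E] [OpensMeasurableSpace E]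
    {P : ℕ → ProbabilityMeasure E} {Q : ProbabilityMeasure E}
    (h : ConvDM (fun k ↦ (P k : Measure E)) Q) : Tendsto P atTop (𝓝 Q) :=
  ProbabilityMeasure.tendsto_iff_forall_integral_tendsto.2 fun g ↦
    h g g.continuous ⟨‖g‖, fun x ↦ by simpa only [Real.norm_eq_abs] using g.norm_coe_le_norm x⟩

lemma MeasureTheory.ProbabilityMeasure.tendsto_pi_const {ι E : Type*} [Fintype ι] [MeasurableSpace E]
    [TopologicalSpace E] [SecondCountableTopology E] [TopologicalSpace.PseudoMetrizableSpace E]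
    [OpensMeasurableSpace E] {P : ℕ → ProbabilityMeasure E} {Q : ProbabilityMeasure E}
    (h : Tendsto P atTop (𝓝 Q)) :
    Tendsto (fun k ↦ pi fun _ : ι ↦ P k) atTop (𝓝 (pi fun _ : ι ↦ Q)) :=
  (ProbabilityMeasure.continuous_pi.tendsto _).comp (tendsto_pi_nhds.2 fun _ ↦ h)

lemma sSup_le_sSup_of_subset_closure {s t : Set ℝ} (hst : s ⊆ closure t) (ht : BddAbove t)
    (ht_nonneg : ∀ x ∈ t, 0 ≤ x) : sSup s ≤ sSup t :=
  Real.sSup_le (fun _ hx ↦ isClosed_Iic.closure_subset_iff.2 (fun _ hy ↦ le_csSup ht hy) (hst hx))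
    (Real.sSup_nonneg ht_nonneg)

theorem power_limited_by_size_of_weak_indistinguishable_general (l n : ℕ)
    (𝒫₀ 𝒫₁ : Set (ProbabilityMeasure (Fin l → ℝ)))
    (hindist : ∀ Q ∈ 𝒫₁, ∃ P : ℕ → ProbabilityMeasure (Fin l → ℝ), (∀ k, P k ∈ 𝒫₀) ∧
      ConvDM (fun k => (P k : Measure (Fin l → ℝ))) (Q : Measure (Fin l → ℝ)))
    (φ : (Fin n → Fin l → ℝ) → ℝ) (hφ : IsTest φ)
    (hcont : ∀ Q ∈ 𝒫₁, ASCont n Q φ) :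
    sSup ((fun Q => tpower n Q φ) '' 𝒫₁) ≤ sSup ((fun P => tpower n P φ) '' 𝒫₀) := by
  obtain ⟨hφ_meas, hφ_Icc⟩ := hφ
  have h_tpower : ∀ P, tpower n P φ = ∫ z, φ z ∂(ProbabilityMeasure.pi fun _ : Fin n ↦ P) :=
    fun _ ↦ rfl
  have h_tpower_mem : ∀ P, tpower n P φ ∈ Set.Icc (0 : ℝ) 1 := fun P ↦
    h_tpower P ▸ integral_mem_Icc_of_forall_mem_Icc _ hφ_Icc
  refine sSup_le_sSup_of_subset_closure ?_ ⟨1, ?_⟩ ?_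
  · rintro _ ⟨Q, hQ, rfl⟩
    obtain ⟨P, hP, hPQ⟩ := hindist Q hQ
    have h_power : Tendsto (fun k ↦ tpower n (P k) φ) atTop (𝓝 (tpower n Q φ)) := by
      simp only [h_tpower]
      exact ProbabilityMeasure.tendsto_integral_of_ae_continuousAt
        (ProbabilityMeasure.tendsto_pi_const hPQ.tendsto) hφ_meas hφ_Icc (ae_iff.2 (hcont Q hQ))
    exact mem_closure_of_tendsto h_power (.of_forall fun k ↦ ⟨P k, hP k, rfl⟩)
  · rintro _ ⟨P, -, rfl⟩
    exact (h_tpower_mem P).2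
  · rintro _ ⟨P, -, rfl⟩
    exact (h_tpower_mem P).1

/-- Theorem 1, sufficiency part: if `𝒫₁` is indistinguishable from `𝒫₀`
in the weak distance, then every test that is a.s. continuous under every alternative has
power limited by size. -/
theorem power_limited_by_size_of_weak_indistinguishable (l n : ℕ) (hl : 1 ≤ l) (hn : 1 ≤ n)
    (𝒫₀ 𝒫₁ : Set (ProbabilityMeasure (Fin l → ℝ)))
    (hindist : ∀ Q ∈ 𝒫₁, ∃ P : ℕ → ProbabilityMeasure (Fin l → ℝ), (∀ k, P k ∈ 𝒫₀) ∧
      ConvDM (fun k => (P k : Measure (Fin l → ℝ))) (Q : Measure (Fin l → ℝ)))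
    (φ : (Fin n → Fin l → ℝ) → ℝ) (hφ : IsTest φ)
    (hcont : ∀ Q ∈ 𝒫₁, ASCont n Q φ) :
    sSup ((fun Q => tpower n Q φ) '' 𝒫₁) ≤ sSup ((fun P => tpower n P φ) '' 𝒫₀) :=
  power_limited_by_size_of_weak_indistinguishable_general l n 𝒫₀ 𝒫₁ hindist φ hφ hcont
end

section
/- Suppose that for every m ∈ μ(𝒫), 𝒫₁(m) is indistinguishable from 𝒫₀(m) in the weak distance and the test φ_m is a.s. continuous under every Q ∈ 𝒫₁(m). If the confidence set C(Z) = {m : φ_m(Z)=0} has confidence level 1−α, then P^{⊗n}( m ∈ C(Z) ) ≥ 1−α for every P ∈ 𝒫 and every m ∈ μ(𝒫). -/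
open MeasureTheory Filter

/-! If `μ P = m`, the bound is the definition of the confidence level. Otherwise
indistinguishability gives `P_k → P` weakly with `μ (P_k) = m`, hence `P_k^{⊗n} → P^{⊗n}` weakly.
As `φ m` takes only the values `0` and `1`, the frontier of the acceptance region `{φ m = 0}` lies
in the discontinuity set of `φ m`, which is `P^{⊗n}`-null; by the portmanteau theorem the
coverage probabilities under `P_k`, all at least `1 - α`, converge to the one under `P`. -/

open Set Topology

instance (n : ℕ) {E : Type*} [MeasurableSpace E] (P : ProbabilityMeasure E) :
    IsProbabilityMeasure (sampleDist n P) :=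
  (ProbabilityMeasure.pi fun _ : Fin n => P).prop

theorem MeasureTheory.ProbabilityMeasure.tendsto_of_convDM {E : Type*} [MeasurableSpace E]
    [TopologicalSpace E] [OpensMeasurableSpace E] {P : ℕ → ProbabilityMeasure E}
    {Q : ProbabilityMeasure E} (h : ConvDM (fun k => (P k : Measure E)) Q) :
    Tendsto P atTop (𝓝 Q) := by
  rw [ProbabilityMeasure.tendsto_iff_forall_integral_tendsto]
  exact fun f => h f f.continuous ⟨‖f‖, f.norm_coe_le_norm⟩

theorem tendsto_sampleDist_of_null_frontier {n : ℕ} {E : Type*} [MeasurableSpace E]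
    [TopologicalSpace E] [SecondCountableTopology E] [TopologicalSpace.PseudoMetrizableSpace E]
    [OpensMeasurableSpace E] {P : ℕ → ProbabilityMeasure E} {Q : ProbabilityMeasure E}
    (hPQ : Tendsto P atTop (𝓝 Q)) {S : Set (Fin n → E)} (hS : sampleDist n Q (frontier S) = 0) :
    Tendsto (fun k => sampleDist n (P k) S) atTop (𝓝 (sampleDist n Q S)) := by
  have hpi : Tendsto (fun k => ProbabilityMeasure.pi fun _ : Fin n => P k) atTop
      (𝓝 (ProbabilityMeasure.pi fun _ => Q)) :=
    (ProbabilityMeasure.continuous_pi.tendsto _).comp (tendsto_pi_nhds.mpr fun _ => hPQ)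
  exact ProbabilityMeasure.tendsto_measure_of_null_frontier_of_tendsto' hpi hS

theorem eventually_eq_of_continuousAt_of_zero_or_one {X : Type*} [TopologicalSpace X]
    {f : X → ℝ} (hf : ∀ x, f x = 0 ∨ f x = 1) {x : X} (hx : ContinuousAt f x) :
    ∀ᶠ y in 𝓝 x, f y = f x := by
  filter_upwards [hx.eventually (Metric.ball_mem_nhds (f x) one_pos)] with y hy
  rw [Real.dist_eq] at hy
  rcases hf x with h | h <;> rcases hf y with h' | h' <;> simp only [h, h'] at hy ⊢ <;>
    norm_num at hy

theorem frontier_setOf_eq_zero_subset {X : Type*} [TopologicalSpace X]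
    {f : X → ℝ} (hf : ∀ x, f x = 0 ∨ f x = 1) :
    frontier {x | f x = 0} ⊆ {x | ¬ ContinuousAt f x} := by
  intro x hfr hx
  have hloc := eventually_eq_of_continuousAt_of_zero_or_one hf hx
  rcases hf x with h | h
  · exact hfr.2 (mem_interior_iff_mem_nhds.mpr (hloc.mono fun y hy => hy.trans h))
  · rw [← frontier_compl] at hfr
    refine hfr.2 (mem_interior_iff_mem_nhds.mpr (hloc.mono fun y hy => ?_))
    simp [hy, h]

theorem le_toReal_measure_of_sInf_eq {ι Ω : Type*} [MeasurableSpace Ω] {A : Set ι}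
    {ν : ι → Measure Ω} {S : ι → Set Ω} {c : ℝ}
    (hc : sInf ((fun i => (ν i (S i)).toReal) '' A) = c) {i : ι} (hi : i ∈ A) :
    c ≤ (ν i (S i)).toReal :=
  hc ▸ csInf_le ⟨0, by rintro _ ⟨j, -, rfl⟩; exact ENNReal.toReal_nonneg⟩ ⟨i, hi, rfl⟩

theorem confidence_set_covers_everything_general (l n : ℕ)
    (𝔓 : Set (ProbabilityMeasure (Fin l → ℝ)))
    (μ : ProbabilityMeasure (Fin l → ℝ) → ℝ)
    (φ : ℝ → (Fin n → Fin l → ℝ) → ℝ)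
    (hφ : ∀ m, Measurable (φ m) ∧ ∀ z, φ m z = 0 ∨ φ m z = 1)
    (hindist : ∀ m ∈ μ '' 𝔓, ∀ Q ∈ 𝔓, μ Q ≠ m →
      ∃ P : ℕ → ProbabilityMeasure (Fin l → ℝ), (∀ k, P k ∈ 𝔓 ∧ μ (P k) = m) ∧
        ConvDM (fun k => (P k : Measure (Fin l → ℝ))) (Q : Measure (Fin l → ℝ)))
    (hcont : ∀ m ∈ μ '' 𝔓, ∀ Q ∈ 𝔓, μ Q ≠ m → ASCont n Q (φ m))
    (α : ℝ)
    (hconf : sInf ((fun P => (sampleDist n P {z | μ P ∈ μ '' 𝔓 ∧ φ (μ P) z = 0}).toReal) '' 𝔓)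
      = 1 - α) :
    ∀ P ∈ 𝔓, ∀ m ∈ μ '' 𝔓,
      1 - α ≤ (sampleDist n P {z | m ∈ μ '' 𝔓 ∧ φ m z = 0}).toReal := by
  intro P hP m hm
  have hcovered : ∀ R ∈ 𝔓, μ R = m →
      1 - α ≤ (sampleDist n R {z | m ∈ μ '' 𝔓 ∧ φ m z = 0}).toReal :=
    fun R hR hRm => hRm ▸ le_toReal_measure_of_sInf_eq hconf hR
  by_cases hPm : μ P = m
  · exact hcovered P hP hPm
  obtain ⟨R, hR, hRP⟩ := hindist m hm P hP hPm
  have hset : {z | m ∈ μ '' 𝔓 ∧ φ m z = 0} = {z | φ m z = 0} := by simp [hm]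
  have hfrontier : sampleDist n P (frontier {z | φ m z = 0}) = 0 :=
    measure_mono_null (frontier_setOf_eq_zero_subset (hφ m).2) (hcont m hm P hP hPm)
  have hlim := tendsto_sampleDist_of_null_frontier
    (ProbabilityMeasure.tendsto_of_convDM hRP) hfrontier
  rw [hset] at hcovered ⊢
  refine ge_of_tendsto ((ENNReal.tendsto_toReal (measure_ne_top _ _)).comp hlim) ?_
  exact Eventually.of_forall fun k => hcovered (R k) (hR k).1 (hR k).2

/-- Theorem 2, first part: under weak-distance indistinguishability of
`𝔓₁(m)` from `𝔓₀(m)` for each `m ∈ μ(𝔓)` and a.s. continuity of each test `φ m` under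
every alternative, a confidence level of `1 − α` for the inverted confidence set forces
every value `m ∈ μ(𝔓)` to be covered with probability at least `1 − α` under every `P`. -/
theorem confidence_set_covers_everything (l n : ℕ) (hl : 1 ≤ l) (hn : 1 ≤ n)
    (𝔓 : Set (ProbabilityMeasure (Fin l → ℝ)))
    (μ : ProbabilityMeasure (Fin l → ℝ) → ℝ)
    (φ : ℝ → (Fin n → Fin l → ℝ) → ℝ)
    (hφ : ∀ m, Measurable (φ m) ∧ ∀ z, φ m z = 0 ∨ φ m z = 1)
    (hindist : ∀ m ∈ μ '' 𝔓, ∀ Q ∈ 𝔓, μ Q ≠ m →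
      ∃ P : ℕ → ProbabilityMeasure (Fin l → ℝ), (∀ k, P k ∈ 𝔓 ∧ μ (P k) = m) ∧
        ConvDM (fun k => (P k : Measure (Fin l → ℝ))) (Q : Measure (Fin l → ℝ)))
    (hcont : ∀ m ∈ μ '' 𝔓, ∀ Q ∈ 𝔓, μ Q ≠ m → ASCont n Q (φ m))
    (α : ℝ)
    (hconf : sInf ((fun P => (sampleDist n P {z | μ P ∈ μ '' 𝔓 ∧ φ (μ P) z = 0}).toReal) '' 𝔓)
      = 1 - α) :
    ∀ P ∈ 𝔓, ∀ m ∈ μ '' 𝔓,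
      1 - α ≤ (sampleDist n P {z | m ∈ μ '' 𝔓 ∧ φ m z = 0}).toReal :=
  confidence_set_covers_everything_general l n 𝔓 μ φ hφ hindist hcont α hconf
end

section
/- Every Borel probability measure Q on ℝ^l is the limit in distribution of a sequence of finitely supported (hence discrete) probability measures. Consequently, for the problem of testing the null hypothesis that the distribution of the data is discrete against the alternative that it is absolutely continuous with respect to Lebesgue measure, the set of alternative distributions is indistinguishable from the set of null distributions in the weak distance, and every test that is a.s. continuous under each absolutely continuous alternative has power limited by size. -/
open MeasureTheory Filter

/-- A discrete distribution: one supported on a countable set. -/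
def IsDiscreteDist {E : Type*} [MeasurableSpace E] (P : Measure E) : Prop :=
  ∃ s : Set E, s.Countable ∧ P sᶜ = 0

/-!
Round every coordinate of `x`, clamped to `[-k, k]`, down to the grid `2⁻ᵏℤ`. The resulting maps
`fₖ` are measurable with finite range and `fₖ x → x` for every `x`, so the pushforwards `Q ∘ fₖ⁻¹`
are finitely supported, and by dominated convergence `∫ φ d(Q ∘ fₖ⁻¹) = ∫ φ ∘ fₖ dQ → ∫ φ dQ` for
every bounded measurable `φ` that is continuous `Q`-almost everywhere. With `φ` continuous this is
convergence in distribution; with `φ` a test it bounds the power at `Q` by the size over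
discrete nulls.
-/

open Topology

section

variable {E : Type*} [MeasurableSpace E]

theorem tendsto_integral_map_of_ae_tendsto [TopologicalSpace E]
    (μ : Measure E) [IsFiniteMeasure μ] {f : ℕ → E → E} (hf : ∀ k, Measurable (f k))
    (hlim : ∀ᵐ x ∂μ, Tendsto (fun k => f k x) atTop (𝓝 x))
    {φ : E → ℝ} (hφ : Measurable φ) {C : ℝ} (hC : ∀ x, |φ x| ≤ C)
    (hcont : ∀ᵐ x ∂μ, ContinuousAt φ x) :
    Tendsto (fun k => ∫ x, φ x ∂μ.map (f k)) atTop (𝓝 (∫ x, φ x ∂μ)) := by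
  refine (tendsto_integral_of_dominated_convergence (fun _ => C)
    (fun k => (hφ.comp (hf k)).aestronglyMeasurable) (integrable_const C)
    (fun k => .of_forall fun x => hC (f k x)) ?_).congr
    fun k => (integral_map (hf k).aemeasurable hφ.aestronglyMeasurable).symm
  filter_upwards [hlim, hcont] with x hx hφx
  exact hφx.tendsto.comp hx

theorem map_compl_eq_zero_of_forall_mem [MeasurableSingletonClass E] (μ : Measure E)
    {f : E → E} (hf : Measurable f) {s : Finset E} (hs : ∀ x, f x ∈ s) :
    μ.map f (↑s)ᶜ = 0 := by
  rw [Measure.map_apply hf s.measurableSet.compl]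
  convert measure_empty (μ := μ)
  ext x
  simp [hs x]

theorem IsDiscreteDist.of_measure_compl_finset {μ : Measure E} {s : Finset E}
    (hs : μ (↑s)ᶜ = 0) : IsDiscreteDist μ :=
  ⟨s, s.countable_toSet, hs⟩

theorem IsTest.integral_le_one {φ : E → ℝ} (hφ : IsTest φ)
    (μ : Measure E) [IsProbabilityMeasure μ] : ∫ x, φ x ∂μ ≤ 1 := by
  simpa using integral_mono_of_nonneg (.of_forall fun x => (hφ.2 x).1)
    (integrable_const (μ := μ) 1) (.of_forall fun x => (hφ.2 x).2)

end

noncomputable def dyadicRound (k : ℕ) (x : ℝ) : ℝ :=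
  ⌊(2 ^ k : ℝ) * max (-(k : ℝ)) (min (k : ℝ) x)⌋ / 2 ^ k

noncomputable def dyadicGrid (k : ℕ) : Finset ℝ :=
  (Finset.Icc (-(k * 2 ^ k : ℤ)) (k * 2 ^ k)).image fun m : ℤ => (m : ℝ) / 2 ^ k

theorem measurable_dyadicRound (k : ℕ) : Measurable (dyadicRound k) :=
  (measurable_from_top.comp (((measurable_const.max (measurable_const.min measurable_id)).const_mul
    _).floor)).div_const _

theorem dyadicRound_mem_dyadicGrid (k : ℕ) (x : ℝ) : dyadicRound k x ∈ dyadicGrid k := by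
  set y := max (-(k : ℝ)) (min (k : ℝ) x)
  have hy : -(k : ℝ) ≤ y ∧ y ≤ k :=
    ⟨le_max_left _ _, max_le (by simp) (min_le_left _ _)⟩
  have hpow : (0 : ℝ) < 2 ^ k := by positivity
  refine Finset.mem_image.2 ⟨⌊(2 ^ k : ℝ) * y⌋, Finset.mem_Icc.2 ⟨?_, ?_⟩, rfl⟩
  · rw [Int.le_floor]
    push_cast
    nlinarith
  · rw [Int.floor_le_iff]
    push_cast
    nlinarith

theorem tendsto_dyadicRound (x : ℝ) : Tendsto (fun k => dyadicRound k x) atTop (𝓝 x) := by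
  refine squeeze_zero_norm' ?_ (tendsto_pow_atTop_nhds_zero_of_lt_one (r := (1 / 2 : ℝ))
    (by norm_num) (by norm_num)) |> tendsto_sub_nhds_zero_iff.1
  filter_upwards [eventually_ge_atTop ⌈|x|⌉₊] with k hk
  have hxk : |x| ≤ k := (Nat.le_ceil _).trans (by exact_mod_cast hk)
  have hclamp : max (-(k : ℝ)) (min (k : ℝ) x) = x := by
    rw [min_eq_right ((le_abs_self x).trans hxk), max_eq_right (by linarith [neg_abs_le x])]
  have hpow : (0 : ℝ) < 2 ^ k := by positivity
  have hdiff : dyadicRound k x - x = (⌊(2 : ℝ) ^ k * x⌋ - 2 ^ k * x) / 2 ^ k := by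
    rw [dyadicRound, hclamp]
    field_simp
  rw [Real.norm_eq_abs, hdiff, abs_div, abs_of_pos hpow, div_pow, one_pow]
  gcongr
  rw [abs_le]
  constructor <;>
    linarith [Int.floor_le ((2 : ℝ) ^ k * x), Int.sub_one_lt_floor ((2 : ℝ) ^ k * x)]

section

variable {ι : Type*}

noncomputable def dyadicApprox (k : ℕ) (x : ι → ℝ) : ι → ℝ :=
  fun i => dyadicRound k (x i)

theorem measurable_dyadicApprox (k : ℕ) : Measurable (dyadicApprox (ι := ι) k) :=
  measurable_pi_lambda _ fun i => (measurable_dyadicRound k).comp (measurable_pi_apply i)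

theorem dyadicApprox_mem_piFinset [Fintype ι] [DecidableEq ι] (k : ℕ) (x : ι → ℝ) :
    dyadicApprox k x ∈ Fintype.piFinset fun _ => dyadicGrid k :=
  Fintype.mem_piFinset.2 fun i => dyadicRound_mem_dyadicGrid k (x i)

theorem tendsto_dyadicApprox (x : ι → ℝ) :
    Tendsto (fun k => dyadicApprox k x) atTop (𝓝 x) :=
  tendsto_pi_nhds.2 fun i => tendsto_dyadicRound (x i)

variable [Fintype ι] [DecidableEq ι]

theorem map_dyadicApprox_compl_piFinset (μ : Measure (ι → ℝ)) (k : ℕ) :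
    μ.map (dyadicApprox k) (↑(Fintype.piFinset fun (_ : ι) => dyadicGrid k))ᶜ = 0 :=
  map_compl_eq_zero_of_forall_mem μ (measurable_dyadicApprox k) (dyadicApprox_mem_piFinset k)

theorem exists_finiteSupport_convDM (Q : ProbabilityMeasure (ι → ℝ)) :
    ∃ P : ℕ → ProbabilityMeasure (ι → ℝ),
      (∀ k, ∃ s : Finset (ι → ℝ), (P k : Measure (ι → ℝ)) (↑s)ᶜ = 0) ∧
      ConvDM (fun k => (P k : Measure (ι → ℝ))) Q := by
  refine ⟨fun k => Q.map (measurable_dyadicApprox k).aemeasurable,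
    fun k => ⟨Fintype.piFinset fun _ => dyadicGrid k, ?_⟩, fun g hg ⟨C, hC⟩ => ?_⟩
  · rw [ProbabilityMeasure.toMeasure_map]
    exact map_dyadicApprox_compl_piFinset _ k
  · simp only [ProbabilityMeasure.toMeasure_map]
    exact tendsto_integral_map_of_ae_tendsto _ measurable_dyadicApprox
      (.of_forall tendsto_dyadicApprox) hg.measurable hC (.of_forall fun _ => hg.continuousAt)

theorem integral_le_sSup_integral_isDiscreteDist (Q : ProbabilityMeasure (ι → ℝ))
    {φ : (ι → ℝ) → ℝ} (hφ : IsTest φ)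
    (hcont : ∀ᵐ x ∂(Q : Measure (ι → ℝ)), ContinuousAt φ x) :
    ∫ x, φ x ∂(Q : Measure (ι → ℝ)) ≤
      sSup ((fun P : ProbabilityMeasure (ι → ℝ) => ∫ x, φ x ∂(P : Measure (ι → ℝ))) ''
        {P | IsDiscreteDist (P : Measure (ι → ℝ))}) := by
  have hbdd : BddAbove ((fun P : ProbabilityMeasure (ι → ℝ) =>
      ∫ x, φ x ∂(P : Measure (ι → ℝ))) ''
      {P | IsDiscreteDist (P : Measure (ι → ℝ))}) :=
    ⟨1, by rintro _ ⟨P, -, rfl⟩; exact hφ.integral_le_one _⟩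
  have hC : ∀ x, |φ x| ≤ 1 := fun x => abs_le.2 ⟨by linarith [(hφ.2 x).1], (hφ.2 x).2⟩
  refine le_of_tendsto (tendsto_integral_map_of_ae_tendsto _ measurable_dyadicApprox
    (.of_forall tendsto_dyadicApprox) hφ.1 hC hcont) (.of_forall fun k => le_csSup hbdd ?_)
  refine ⟨Q.map (measurable_dyadicApprox k).aemeasurable, ?_,
    by dsimp only; rw [ProbabilityMeasure.toMeasure_map]⟩
  rw [Set.mem_ofPred_eq, ProbabilityMeasure.toMeasure_map]
  exact .of_measure_compl_finset (map_dyadicApprox_compl_piFinset _ k)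

end

theorem discrete_vs_continuous_impossible_general (l : ℕ) :
    (∀ Q : ProbabilityMeasure (Fin l → ℝ), ∃ P : ℕ → ProbabilityMeasure (Fin l → ℝ),
      (∀ k, ∃ s : Finset (Fin l → ℝ), (P k : Measure (Fin l → ℝ)) (↑s)ᶜ = 0) ∧
      ConvDM (fun k => (P k : Measure (Fin l → ℝ))) (Q : Measure (Fin l → ℝ))) ∧
    (∀ Q : ProbabilityMeasure (Fin l → ℝ),
      (Q : Measure (Fin l → ℝ)) ≪ MeasureTheory.volume →
      ∃ P : ℕ → ProbabilityMeasure (Fin l → ℝ),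
        (∀ k, IsDiscreteDist (P k : Measure (Fin l → ℝ))) ∧
        ConvDM (fun k => (P k : Measure (Fin l → ℝ))) (Q : Measure (Fin l → ℝ))) ∧
    (∀ φ : (Fin l → ℝ) → ℝ, IsTest φ →
      (∀ Q : ProbabilityMeasure (Fin l → ℝ), (Q : Measure (Fin l → ℝ)) ≪ MeasureTheory.volume →
        (Q : Measure (Fin l → ℝ)) {x | ¬ ContinuousAt φ x} = 0) →
      sSup ((fun Q : ProbabilityMeasure (Fin l → ℝ) => ∫ x, φ x ∂(Q : Measure (Fin l → ℝ))) ''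
          {Q : ProbabilityMeasure (Fin l → ℝ) | (Q : Measure (Fin l → ℝ)) ≪ MeasureTheory.volume}) ≤
      sSup ((fun P : ProbabilityMeasure (Fin l → ℝ) => ∫ x, φ x ∂(P : Measure (Fin l → ℝ))) ''
          {P : ProbabilityMeasure (Fin l → ℝ) | IsDiscreteDist (P : Measure (Fin l → ℝ))})) := by
  refine ⟨exists_finiteSupport_convDM, fun Q _ => ?_, fun φ hφ hcont => ?_⟩
  · obtain ⟨P, hfin, hconv⟩ := exists_finiteSupport_convDM Q
    exact ⟨P, fun k => (hfin k).elim fun _ hs => .of_measure_compl_finset hs, hconv⟩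
  · refine Real.sSup_le ?_ (Real.sSup_nonneg ?_)
    · rintro _ ⟨Q, hQ, rfl⟩
      exact integral_le_sSup_integral_isDiscreteDist Q hφ (ae_iff.2 (hcont Q hQ))
    · rintro _ ⟨P, -, rfl⟩
      exact integral_nonneg fun x => (hφ.2 x).1

/-- every Borel probability measure on `ℝ^l` is the limit in distribution
of finitely supported probability measures; hence the absolutely continuous alternatives are
indistinguishable in the weak distance from the discrete null distributions, and every test
a.s. continuous under each absolutely continuous alternative has power limited by size. -/
theorem discrete_vs_continuous_impossible (l : ℕ) (hl : 1 ≤ l) :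
    (∀ Q : ProbabilityMeasure (Fin l → ℝ), ∃ P : ℕ → ProbabilityMeasure (Fin l → ℝ),
      (∀ k, ∃ s : Finset (Fin l → ℝ), (P k : Measure (Fin l → ℝ)) (↑s)ᶜ = 0) ∧
      ConvDM (fun k => (P k : Measure (Fin l → ℝ))) (Q : Measure (Fin l → ℝ))) ∧
    (∀ Q : ProbabilityMeasure (Fin l → ℝ),
      (Q : Measure (Fin l → ℝ)) ≪ MeasureTheory.volume →
      ∃ P : ℕ → ProbabilityMeasure (Fin l → ℝ),
        (∀ k, IsDiscreteDist (P k : Measure (Fin l → ℝ))) ∧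
        ConvDM (fun k => (P k : Measure (Fin l → ℝ))) (Q : Measure (Fin l → ℝ))) ∧
    (∀ φ : (Fin l → ℝ) → ℝ, IsTest φ →
      (∀ Q : ProbabilityMeasure (Fin l → ℝ), (Q : Measure (Fin l → ℝ)) ≪ MeasureTheory.volume →
        (Q : Measure (Fin l → ℝ)) {x | ¬ ContinuousAt φ x} = 0) →
      sSup ((fun Q : ProbabilityMeasure (Fin l → ℝ) => ∫ x, φ x ∂(Q : Measure (Fin l → ℝ))) ''
          {Q : ProbabilityMeasure (Fin l → ℝ) | (Q : Measure (Fin l → ℝ)) ≪ MeasureTheory.volume}) ≤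
      sSup ((fun P : ProbabilityMeasure (Fin l → ℝ) => ∫ x, φ x ∂(P : Measure (Fin l → ℝ))) ''
          {P : ProbabilityMeasure (Fin l → ℝ) | IsDiscreteDist (P : Measure (Fin l → ℝ))})) :=
  discrete_vs_continuous_impossible_general l
end

section
/- (Regression Discontinuity Design, indistinguishability.) For every m ∈ ℝ, 𝒫₁(m) is indistinguishable from 𝒫₀(m) in the weak distance: for every Q ∈ 𝒫 with μ(Q) ≠ m there exists a sequence {P_k} in 𝒫 with μ(P_k) = m for all k and P_k →d Q. Explicitly, one may take P_k to have the same marginal distribution of X as Q, the same conditional distribution of (Y,X) given X ∉ [c−1/k, c) as Q, and conditional mean g_k(x) = E_Q[Y|X=x] + 1{c−1/k ≤ x < c}·k·(μ(Q) − m)·(x − c + 1/k), which satisfies g_k ∈ 𝒢 and has jump m at c. -/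
/-!
Push `Q` forward along `(y, x) ↦ (y + u_k(x), x)`, where `u_k` is the linear ramp on the window
`[c - 1/(k+1), c)` rising to height `μ Q - m` at `c`. This keeps the law of `X`, adds `u_k` to the
conditional mean, and so raises `g(c−)` by exactly `μ Q - m` while leaving everything continuous
away from `c`. Every point is moved for only finitely many `k`, so the push-forwards converge
weakly to `Q` by dominated convergence.
-/

open MeasureTheory Filter Set

/-- Membership in the class `𝒢`: `g` is bounded, continuous at every `x ≠ c`, with finite
one-sided limits `gp = g(c+)` and `gm = g(c−)` at the cutoff `c`. -/
def JumpFun (c : ℝ) (g : ℝ → ℝ) (gp gm : ℝ) : Prop :=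
  (∃ C, ∀ x, |g x| ≤ C) ∧ (∀ x : ℝ, x ≠ c → ContinuousAt g x) ∧
  Tendsto g (nhdsWithin c (Ioi c)) (nhds gp) ∧
  Tendsto g (nhdsWithin c (Iio c)) (nhds gm)

/-- The forcing variable `X = z.2` is continuously distributed with a continuous density `f`
and the cutoff `c` lies in the interior of the support of the density. -/
def XCont (c : ℝ) (P : ProbabilityMeasure (ℝ × ℝ)) (f : ℝ → ℝ) : Prop :=
  Continuous f ∧ (∀ x, 0 ≤ f x) ∧
  (P : Measure (ℝ × ℝ)).map Prod.snd
    = MeasureTheory.volume.withDensity (fun x => ENNReal.ofReal (f x)) ∧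
  c ∈ interior {x | 0 < f x}

/-- `E_P[Y | X] = g(X)` `P`-almost surely, expressed via the defining property of
conditional expectations, together with integrability of `Y = z.1`. -/
def CondMeanEq (P : ProbabilityMeasure (ℝ × ℝ)) (g : ℝ → ℝ) : Prop :=
  Integrable (fun z : ℝ × ℝ => z.1) (P : Measure (ℝ × ℝ)) ∧
  ∀ B : Set ℝ, MeasurableSet B →
    ∫ z in {z : ℝ × ℝ | z.2 ∈ B}, z.1 ∂(P : Measure (ℝ × ℝ))
      = ∫ z in {z : ℝ × ℝ | z.2 ∈ B}, g z.2 ∂(P : Measure (ℝ × ℝ))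

/-- The family `𝒫` of sharp RDD models: `(Y,X) ∼ P` with `X` continuously distributed,
`c` interior to its support, and conditional mean in the class `𝒢`. -/
def MemRDD (c : ℝ) (P : ProbabilityMeasure (ℝ × ℝ)) : Prop :=
  (∃ f, XCont c P f) ∧ ∃ g gp gm, JumpFun c g gp gm ∧ CondMeanEq P g

lemma integrable_comp_snd_of_abs_le {α : Type*} [MeasurableSpace α] {h : ℝ → ℝ} {C : ℝ}
    (hh : Measurable h) (hC : ∀ x, |h x| ≤ C) (ν : Measure (α × ℝ)) [IsFiniteMeasure ν] :
    Integrable (fun z => h z.2) ν :=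
  .of_bound (hh.comp measurable_snd).aestronglyMeasurable C (ae_of_all _ fun z => hC z.2)

lemma convDM_map_of_tendsto {E : Type*} [MeasurableSpace E] [TopologicalSpace E]
    [OpensMeasurableSpace E] (μ : Measure E) [IsFiniteMeasure μ] {T : ℕ → E → E}
    (hT : ∀ k, Measurable (T k)) (hlim : ∀ x, Tendsto (fun k => T k x) atTop (nhds x)) :
    ConvDM (fun k => μ.map (T k)) μ := by
  rintro g hg ⟨C, hC⟩
  simp_rw [integral_map (hT _).aemeasurable hg.measurable.aestronglyMeasurable]
  exact tendsto_integral_of_dominated_convergence (fun _ => C)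
    (fun k => (hg.measurable.comp (hT k)).aestronglyMeasurable) (integrable_const C)
    (fun k => ae_of_all _ fun x => hC (T k x))
    (ae_of_all _ fun x => (hg.tendsto x).comp (hlim x))

namespace JumpFun

variable {c : ℝ} {g h : ℝ → ℝ} {gp gm hp hm : ℝ}

lemma measurable (hg : JumpFun c g gp gm) : Measurable g :=
  measurable_of_continuousOn_compl_singleton c fun x hx => (hg.2.1 x hx).continuousWithinAt

lemma integrable_comp_snd {α : Type*} [MeasurableSpace α] (hg : JumpFun c g gp gm)
    (ν : Measure (α × ℝ)) [IsFiniteMeasure ν] : Integrable (fun z => g z.2) ν :=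
  let ⟨_, hC⟩ := hg.1
  integrable_comp_snd_of_abs_le hg.measurable hC ν

lemma add (hg : JumpFun c g gp gm) (hh : JumpFun c h hp hm) :
    JumpFun c (fun x => g x + h x) (gp + hp) (gm + hm) := by
  obtain ⟨⟨C, hC⟩, hcont, hright, hleft⟩ := hg
  obtain ⟨⟨D, hD⟩, hcont', hright', hleft'⟩ := hh
  exact ⟨⟨C + D, fun x => (abs_add_le _ _).trans (add_le_add (hC x) (hD x))⟩,
    fun x hx => (hcont x hx).add (hcont' x hx), hright.add hright', hleft.add hleft'⟩

end JumpFun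

noncomputable def ramp (a c K : ℝ) : ℝ → ℝ :=
  (Ico a c).indicator fun x => K * (x - a)

section Ramp

variable {a c K : ℝ}

lemma ramp_of_notMem {x : ℝ} (hx : x ∉ Ico a c) : ramp a c K x = 0 :=
  indicator_of_notMem hx _

lemma abs_ramp_le (hac : a ≤ c) (x : ℝ) : |ramp a c K x| ≤ |K| * (c - a) := by
  by_cases hx : x ∈ Ico a c
  · rw [ramp, indicator_of_mem hx, abs_mul, abs_of_nonneg (sub_nonneg.2 hx.1)]
    gcongr
    exact hx.2.le
  · rw [ramp_of_notMem hx, abs_zero]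
    exact mul_nonneg (abs_nonneg K) (sub_nonneg.2 hac)

lemma ramp_eqOn_Iio : EqOn (ramp a c K) (fun x => K * max (x - a) 0) (Iio c) := by
  intro x hx
  by_cases hax : a ≤ x
  · rw [ramp, indicator_of_mem (show x ∈ Ico a c from ⟨hax, hx⟩)]
    simp [max_eq_left (sub_nonneg.2 hax)]
  · rw [ramp_of_notMem fun h => hax h.1]
    simp [max_eq_right (by linarith : x - a ≤ 0)]

lemma ramp_eqOn_Ici : EqOn (ramp a c K) 0 (Ici c) :=
  fun _ hx => ramp_of_notMem fun h => not_lt.2 hx h.2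

lemma jumpFun_ramp (hac : a < c) : JumpFun c (ramp a c K) 0 (K * (c - a)) := by
  have hcont : Continuous fun x => K * max (x - a) 0 := by fun_prop
  refine ⟨⟨|K| * (c - a), abs_ramp_le hac.le⟩, fun x hx => ?_, ?_, ?_⟩
  · rcases lt_or_gt_of_ne hx with hxc | hxc
    · exact hcont.continuousAt.congr
        (ramp_eqOn_Iio.eventuallyEq_of_mem (isOpen_Iio.mem_nhds hxc)).symm
    · exact continuousAt_const.congr
        (ramp_eqOn_Ici.eventuallyEq_of_mem (Ici_mem_nhds hxc)).symm
  · exact tendsto_const_nhds.congr'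
      (ramp_eqOn_Ici.eventuallyEq_of_mem
        (mem_of_superset self_mem_nhdsWithin Ioi_subset_Ici_self)).symm
  · have hleft := (hcont.tendsto c).mono_left (nhdsWithin_le_nhds (s := Iio c))
    rw [max_eq_left (sub_nonneg.2 hac.le)] at hleft
    exact hleft.congr' (ramp_eqOn_Iio.eventuallyEq_of_mem self_mem_nhdsWithin).symm

lemma eventually_ramp_eq_zero {ι : Type*} {l : Filter ι} {a K : ι → ℝ}
    (ha : Tendsto a l (nhds c)) (x : ℝ) : ∀ᶠ i in l, ramp (a i) c (K i) x = 0 := by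
  rcases lt_or_ge x c with hxc | hxc
  · filter_upwards [ha.eventually_const_lt hxc] with i hi
    exact ramp_of_notMem fun h => (h.1.trans_lt hi).false
  · exact Eventually.of_forall fun i => ramp_eqOn_Ici hxc

lemma jumpFun_ramp_window (L : ℝ) (k : ℕ) :
    JumpFun c (ramp (c - 1/(k+1 : ℝ)) c ((k+1 : ℝ) * L)) 0 L := by
  convert jumpFun_ramp (sub_lt_self c (by positivity : 0 < 1/(k+1 : ℝ))) using 1
  field_simp
  ring

end Ramp

def shiftY (u : ℝ → ℝ) (z : ℝ × ℝ) : ℝ × ℝ := (z.1 + u z.2, z.2)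

section ShiftY

variable {u : ℝ → ℝ}

lemma measurable_shiftY (hu : Measurable u) : Measurable (shiftY u) :=
  (measurable_fst.add (hu.comp measurable_snd)).prodMk measurable_snd

lemma shiftY_eq_self {z : ℝ × ℝ} (hz : u z.2 = 0) : shiftY u z = z := by
  simp [shiftY, hz]

lemma map_snd_map_shiftY (hu : Measurable u) (ν : Measure (ℝ × ℝ)) :
    (ν.map (shiftY u)).map Prod.snd = ν.map Prod.snd := by
  rw [Measure.map_map measurable_snd (measurable_shiftY hu)]
  rfl

lemma map_shiftY_inter_eq (hu : Measurable u) (ν : Measure (ℝ × ℝ)) {S : Set ℝ}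
    (hS : MeasurableSet S) (hu0 : ∀ x ∉ S, u x = 0) {B : Set (ℝ × ℝ)} (hB : MeasurableSet B) :
    ν.map (shiftY u) (B ∩ {z | z.2 ∉ S}) = ν (B ∩ {z | z.2 ∉ S}) := by
  have hN : MeasurableSet {z : ℝ × ℝ | z.2 ∉ S} := (measurable_snd hS).compl
  rw [Measure.map_apply (measurable_shiftY hu) (hB.inter hN)]
  congr 1
  ext z
  by_cases hz : z.2 ∈ S
  · simp [shiftY, hz]
  · simp [shiftY_eq_self (hu0 _ hz), hz]

lemma CondMeanEq.map_shiftY {P : ProbabilityMeasure (ℝ × ℝ)} {g : ℝ → ℝ} (hP : CondMeanEq P g)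
    (hg : Measurable g) (hg_int : Integrable (fun z => g z.2) (P : Measure (ℝ × ℝ)))
    (hu : Measurable u) (hu_int : Integrable (fun z => u z.2) (P : Measure (ℝ × ℝ))) :
    CondMeanEq (P.map (measurable_shiftY hu).aemeasurable) (fun x => g x + u x) := by
  have hT := (measurable_shiftY hu).aemeasurable (μ := (P : Measure (ℝ × ℝ)))
  refine ⟨?_, fun B hB => ?_⟩
  · rw [ProbabilityMeasure.toMeasure_map, integrable_map_measure
      measurable_fst.aestronglyMeasurable hT]
    exact hP.1.add hu_int
  · have hS : MeasurableSet {z : ℝ × ℝ | z.2 ∈ B} := measurable_snd hB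
    rw [ProbabilityMeasure.toMeasure_map,
      setIntegral_map hS measurable_fst.aestronglyMeasurable hT,
      setIntegral_map (f := fun z : ℝ × ℝ => g z.2 + u z.2) hS
        ((hg.comp measurable_snd).add (hu.comp measurable_snd)).aestronglyMeasurable hT]
    change ∫ z in {z : ℝ × ℝ | z.2 ∈ B}, (z.1 + u z.2) ∂(P : Measure (ℝ × ℝ))
      = ∫ z in {z : ℝ × ℝ | z.2 ∈ B}, (g z.2 + u z.2) ∂(P : Measure (ℝ × ℝ))
    rw [integral_add hP.1.integrableOn hu_int.integrableOn,
      integral_add hg_int.integrableOn hu_int.integrableOn, hP.2 B hB]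

end ShiftY

lemma tendsto_shiftY_ramp_window {c : ℝ} (K : ℕ → ℝ) (z : ℝ × ℝ) :
    Tendsto (fun k : ℕ => shiftY (ramp (c - 1/(k+1 : ℝ)) c (K k)) z) atTop (nhds z) := by
  have hwin : Tendsto (fun k : ℕ => c - 1/(k+1 : ℝ)) atTop (nhds c) := by
    simpa using tendsto_const_nhds.sub (tendsto_one_div_add_atTop_nhds_zero_nat (𝕜 := ℝ))
  exact tendsto_const_nhds.congr' ((eventually_ramp_eq_zero hwin z.2).mono
    fun k hk => (shiftY_eq_self hk).symm)

lemma XCont.of_map_snd_eq {c : ℝ} {P P' : ProbabilityMeasure (ℝ × ℝ)} {f : ℝ → ℝ}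
    (hP : XCont c P f)
    (h : (P' : Measure (ℝ × ℝ)).map Prod.snd = (P : Measure (ℝ × ℝ)).map Prod.snd) :
    XCont c P' f :=
  ⟨hP.1, hP.2.1, h.trans hP.2.2.1, hP.2.2.2⟩

theorem rdd_indistinguishable_general (c : ℝ) (μ : ProbabilityMeasure (ℝ × ℝ) → ℝ)
    (hμ : ∀ (P : ProbabilityMeasure (ℝ × ℝ)) (g : ℝ → ℝ) (gp gm : ℝ),
      MemRDD c P → JumpFun c g gp gm → CondMeanEq P g → μ P = gp - gm)
    (m : ℝ) (Q : ProbabilityMeasure (ℝ × ℝ)) (hQ : MemRDD c Q) :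
    ∃ P : ℕ → ProbabilityMeasure (ℝ × ℝ),
      (∀ k, MemRDD c (P k) ∧ μ (P k) = m) ∧
      ConvDM (fun k => ((P k) : Measure (ℝ × ℝ))) (Q : Measure (ℝ × ℝ)) ∧
      ∃ gQ gp gm, JumpFun c gQ gp gm ∧ CondMeanEq Q gQ ∧
        ∀ k : ℕ,
          ((P k : Measure (ℝ × ℝ)).map Prod.snd = (Q : Measure (ℝ × ℝ)).map Prod.snd) ∧
          (∀ B : Set (ℝ × ℝ), MeasurableSet B →
            (P k : Measure (ℝ × ℝ)) (B ∩ {z : ℝ × ℝ | z.2 ∉ Ico (c - 1/(k+1 : ℝ)) c})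
              = (Q : Measure (ℝ × ℝ)) (B ∩ {z : ℝ × ℝ | z.2 ∉ Ico (c - 1/(k+1 : ℝ)) c})) ∧
          CondMeanEq (P k) (fun x => gQ x +
            (Ico (c - 1/(k+1 : ℝ)) c).indicator
              (fun x => (k+1 : ℝ) * (μ Q - m) * (x - c + 1/(k+1 : ℝ))) x) := by
  obtain ⟨⟨f, hf⟩, gQ, gp, gm, hJ, hC⟩ := hQ
  have hμQ : μ Q = gp - gm := hμ Q gQ gp gm ⟨⟨f, hf⟩, gQ, gp, gm, hJ, hC⟩ hJ hC
  set u : ℕ → ℝ → ℝ := fun k => ramp (c - 1/(k+1 : ℝ)) c ((k+1 : ℝ) * (μ Q - m))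
  have hu : ∀ k, JumpFun c (u k) 0 (μ Q - m) := jumpFun_ramp_window _
  have hJk : ∀ k, JumpFun c (fun x => gQ x + u k x) gp (gp - m) := fun k => by
    convert hJ.add (hu k) using 2 <;> linarith
  let P : ℕ → ProbabilityMeasure (ℝ × ℝ) := fun k =>
    Q.map (measurable_shiftY (hu k).measurable).aemeasurable
  have hmarg : ∀ k, (P k : Measure (ℝ × ℝ)).map Prod.snd = (Q : Measure (ℝ × ℝ)).map Prod.snd :=
    fun k => map_snd_map_shiftY (hu k).measurable Q
  have hCM : ∀ k, CondMeanEq (P k) (fun x => gQ x + u k x) := fun k =>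
    hC.map_shiftY hJ.measurable (hJ.integrable_comp_snd _) (hu k).measurable
      ((hu k).integrable_comp_snd _)
  have hMem : ∀ k, MemRDD c (P k) := fun k =>
    ⟨⟨f, hf.of_map_snd_eq (hmarg k)⟩, _, _, _, hJk k, hCM k⟩
  have hu_eq : ∀ k : ℕ, u k = (Ico (c - 1/(k+1 : ℝ)) c).indicator
      (fun x => (k+1 : ℝ) * (μ Q - m) * (x - c + 1/(k+1 : ℝ))) := fun k => by
    simp only [u, ramp, sub_sub_eq_add_sub, add_sub_right_comm]
  refine ⟨P, fun k => ⟨hMem k, by rw [hμ _ _ _ _ (hMem k) (hJk k) (hCM k)]; ring⟩,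
    convDM_map_of_tendsto _ (fun k => measurable_shiftY (hu k).measurable)
      (tendsto_shiftY_ramp_window _), gQ, gp, gm, hJ, hC, fun k => ⟨hmarg k,
    fun B hB => map_shiftY_inter_eq (hu k).measurable Q measurableSet_Ico
      (fun x hx => ramp_of_notMem hx) hB, hu_eq k ▸ hCM k⟩⟩

/-- Corollary 1, indistinguishability in RDD: for every `m`, any model
`Q ∈ 𝒫` with jump `μ(Q) ≠ m` is the weak limit of models in `𝒫` whose jump equals `m`;
moreover the approximating sequence may be taken to match the marginal of `X`, to match the
conditional law of `(Y,X)` outside the window `[c − 1/k, c)`, and to have conditional mean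
`g_k(x) = E_Q[Y|X=x] + 1{c−1/k ≤ x < c}·k·(μ(Q) − m)·(x − c + 1/k)`. -/
theorem rdd_indistinguishable (c : ℝ) (μ : ProbabilityMeasure (ℝ × ℝ) → ℝ)
    (hμ : ∀ (P : ProbabilityMeasure (ℝ × ℝ)) (g : ℝ → ℝ) (gp gm : ℝ),
      MemRDD c P → JumpFun c g gp gm → CondMeanEq P g → μ P = gp - gm)
    (m : ℝ) (Q : ProbabilityMeasure (ℝ × ℝ)) (hQ : MemRDD c Q) (hQm : μ Q ≠ m) :
    ∃ P : ℕ → ProbabilityMeasure (ℝ × ℝ),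
      (∀ k, MemRDD c (P k) ∧ μ (P k) = m) ∧
      ConvDM (fun k => ((P k) : Measure (ℝ × ℝ))) (Q : Measure (ℝ × ℝ)) ∧
      ∃ gQ gp gm, JumpFun c gQ gp gm ∧ CondMeanEq Q gQ ∧
        ∀ k : ℕ,
          ((P k : Measure (ℝ × ℝ)).map Prod.snd = (Q : Measure (ℝ × ℝ)).map Prod.snd) ∧
          (∀ B : Set (ℝ × ℝ), MeasurableSet B →
            (P k : Measure (ℝ × ℝ)) (B ∩ {z : ℝ × ℝ | z.2 ∉ Ico (c - 1/(k+1 : ℝ)) c})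
              = (Q : Measure (ℝ × ℝ)) (B ∩ {z : ℝ × ℝ | z.2 ∉ Ico (c - 1/(k+1 : ℝ)) c})) ∧
          CondMeanEq (P k) (fun x => gQ x +
            (Ico (c - 1/(k+1 : ℝ)) c).indicator
              (fun x => (k+1 : ℝ) * (μ Q - m) * (x - c + 1/(k+1 : ℝ))) x) :=
  rdd_indistinguishable_general c μ hμ m Q hQ
end

section
/- (Regression Discontinuity Design, confidence sets.) Let {φ_m}_{m∈ℝ} be nonrandomized tests of H₀ : μ(P) = m, each a.s. continuous under every Q ∈ 𝒫₁(m), and let C(Z) = {m ∈ ℝ : φ_m(Z) = 0}. If C has confidence level 1−α > 0, then for every P ∈ 𝒫 the set C(Z) is unbounded with strictly positive P^{⊗n}-probability; equivalently, any such confidence set for the jump μ that is almost-surely bounded (e.g., has finite expected length) under some P ∈ 𝒫 has zero confidence level. -/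
open MeasureTheory Filter Set

section RDDAux

noncomputable def bump (c d : ℝ) (k : ℕ) (x : ℝ) : ℝ :=
  if c < x then d * max 0 (1 - (x - c) * k) else 0

lemma bump_abs_le (c d : ℝ) (k : ℕ) (x : ℝ) : |bump c d k x| ≤ |d| := by
  unfold bump
  split_ifs with h
  · rw [abs_mul]
    have h0 : (0:ℝ) ≤ max 0 (1 - (x - c) * k) := le_max_left _ _
    have h1 : max 0 (1 - (x - c) * (k:ℝ)) ≤ 1 := by
      apply max_le (by norm_num)
      nlinarith [mul_nonneg (sub_pos.2 h).le (Nat.cast_nonneg (α := ℝ) k)]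
    calc |d| * |max 0 (1 - (x - c) * (k:ℝ))| = |d| * max 0 (1 - (x - c) * k) := by
          rw [abs_of_nonneg h0]
      _ ≤ |d| * 1 := by gcongr
      _ = |d| := mul_one _
  · simpa using abs_nonneg d

lemma bump_cont_fun (c d : ℝ) (k : ℕ) :
    Continuous (fun x : ℝ => d * max 0 (1 - (x - c) * k)) := by fun_prop

lemma bump_continuousAt (c d : ℝ) (k : ℕ) {x : ℝ} (hx : x ≠ c) :
    ContinuousAt (bump c d k) x := by
  rcases lt_or_gt_of_ne hx with h | h
  · have : ∀ᶠ y in nhds x, bump c d k y = 0 :=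
      Filter.eventually_of_mem (isOpen_Iio.mem_nhds h)
        (fun y hy => if_neg (not_lt.2 (le_of_lt hy)))
    exact continuousAt_const.congr (Filter.EventuallyEq.symm this)
  · have : ∀ᶠ y in nhds x, bump c d k y = d * max 0 (1 - (y - c) * k) :=
      Filter.eventually_of_mem (isOpen_Ioi.mem_nhds h) (fun y hy => if_pos hy)
    exact ((bump_cont_fun c d k).continuousAt).congr (Filter.EventuallyEq.symm this)

lemma bump_tendsto_right (c d : ℝ) (k : ℕ) :
    Tendsto (bump c d k) (nhdsWithin c (Ioi c)) (nhds d) := by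
  have hF : Tendsto (fun x : ℝ => d * max 0 (1 - (x - c) * k))
      (nhdsWithin c (Ioi c)) (nhds d) := by
    have h := ((bump_cont_fun c d k).continuousAt (x := c)).continuousWithinAt
      (s := Ioi c)
    unfold ContinuousWithinAt at h
    simpa using h
  refine hF.congr' ?_
  filter_upwards [self_mem_nhdsWithin] with y hy
  exact (if_pos hy).symm

lemma bump_tendsto_left (c d : ℝ) (k : ℕ) :
    Tendsto (bump c d k) (nhdsWithin c (Iio c)) (nhds 0) := by
  refine tendsto_const_nhds.congr' ?_
  filter_upwards [self_mem_nhdsWithin] with y hy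
  exact (if_neg (not_lt.2 hy.le)).symm

lemma bump_measurable (c d : ℝ) (k : ℕ) : Measurable (bump c d k) := by
  exact Measurable.ite (measurableSet_lt measurable_const measurable_id)
    (bump_cont_fun c d k).measurable measurable_const

lemma bump_eventually_zero (c d : ℝ) (x : ℝ) :
    ∀ᶠ k : ℕ in atTop, bump c d k x = 0 := by
  rcases le_or_gt x c with h | h
  · exact Filter.Eventually.of_forall fun k => if_neg (not_lt.2 h)
  · filter_upwards [eventually_ge_atTop ⌈(x - c)⁻¹⌉₊] with k hk
    have hxc : (0:ℝ) < x - c := sub_pos.2 h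
    have h1 : (1:ℝ) ≤ (x - c) * k := by
      have h2 : (x - c)⁻¹ ≤ (k : ℝ) :=
        le_trans (Nat.le_ceil _) (Nat.cast_le.2 hk)
      calc (1:ℝ) = (x - c) * (x - c)⁻¹ := (mul_inv_cancel₀ hxc.ne').symm
        _ ≤ (x - c) * k := by gcongr
    unfold bump
    rw [if_pos h, max_eq_left (by linarith), mul_zero]

lemma pi_map_map {n : ℕ} (μ : Measure (ℝ × ℝ)) [IsProbabilityMeasure μ]
    (T : ℝ × ℝ → ℝ × ℝ) (hT : Measurable T) :
    (Measure.pi fun _ : Fin n => μ.map T)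
      = (Measure.pi fun _ : Fin n => μ).map (fun z i => T (z i)) := by
  have : IsProbabilityMeasure (μ.map T) := Measure.isProbabilityMeasure_map hT.aemeasurable
  have hF : Measurable (fun z : Fin n → ℝ × ℝ => fun i => T (z i)) :=
    measurable_pi_lambda _ fun i => hT.comp (measurable_pi_apply i)
  refine Measure.pi_eq (μ := fun _ : Fin n => μ.map T) fun s hs => ?_
  rw [Measure.map_apply hF (MeasurableSet.univ_pi hs)]
  have hpre : (fun z : Fin n → ℝ × ℝ => fun i => T (z i)) ⁻¹' (Set.pi Set.univ s)
      = Set.pi Set.univ fun i => T ⁻¹' s i := by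
    ext z; simp [Set.mem_pi]
  rw [hpre, Measure.pi_pi]
  exact Finset.prod_congr rfl fun i _ => (Measure.map_apply hT (hs i)).symm

lemma integrable_of_abs_le {E : Type*} [MeasurableSpace E] {μ : Measure E}
    [IsFiniteMeasure μ] {f : E → ℝ} (hm : AEStronglyMeasurable f μ) (C : ℝ)
    (hC : ∀ x, |f x| ≤ C) : Integrable f μ :=
  (integrable_const C).mono' hm (ae_of_all _ fun x => by simpa using hC x)

end RDDAux

/-- Corollary 1(ii), RDD confidence sets: a confidence set for the jump
`μ` obtained by inverting nonrandomized tests `φ m` that are a.s. continuous under every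
alternative, if it has confidence level `1 − α > 0`, must be unbounded with strictly
positive probability under every `P ∈ 𝒫`. -/

theorem rdd_confidence_set_unbounded (n : ℕ) (hn : 1 ≤ n) (c : ℝ)
    (μ : ProbabilityMeasure (ℝ × ℝ) → ℝ)
    (hμ : ∀ (P : ProbabilityMeasure (ℝ × ℝ)) (g : ℝ → ℝ) (gp gm : ℝ),
      MemRDD c P → JumpFun c g gp gm → CondMeanEq P g → μ P = gp - gm)
    (φ : ℝ → (Fin n → ℝ × ℝ) → ℝ)
    (hφ : ∀ m, Measurable (φ m) ∧ ∀ z, φ m z = 0 ∨ φ m z = 1)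
    (hcont : ∀ m : ℝ, ∀ Q : ProbabilityMeasure (ℝ × ℝ), MemRDD c Q → μ Q ≠ m →
      ASCont n Q (φ m))
    (α : ℝ)
    (hconf : sInf ((fun P => (sampleDist n P {z | φ (μ P) z = 0}).toReal)
      '' {P | MemRDD c P}) = 1 - α)
    (hα : 0 < 1 - α) :
    ∀ P : ProbabilityMeasure (ℝ × ℝ), MemRDD c P →
      0 < sampleDist n P {z | ¬ Bornology.IsBounded {m : ℝ | φ m z = 0}} := by
  intro P hP
  have hlow : ∀ Q : ProbabilityMeasure (ℝ × ℝ), MemRDD c Q →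
      1 - α ≤ (sampleDist n Q {z | φ (μ Q) z = 0}).toReal := by
    intro Q hQ
    rw [← hconf]
    refine csInf_le ⟨0, ?_⟩ ⟨Q, hQ, rfl⟩
    rintro r ⟨Q', -, rfl⟩
    exact ENNReal.toReal_nonneg
  have hPmem : MemRDD c P := hP
  obtain ⟨⟨f, hf⟩, g, gp, gm, hg, hcm⟩ := hP
  obtain ⟨Cg, hCg⟩ := hg.1
  have hgmeas : Measurable g :=
    measurable_of_continuousOn_compl_singleton c
      (fun x hx => (hg.2.1 x hx).continuousWithinAt)
  have hgint : Integrable (fun z : ℝ × ℝ => g z.2) (P : Measure (ℝ × ℝ)) :=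
    integrable_of_abs_le (hgmeas.comp measurable_snd).aestronglyMeasurable Cg
      (fun z => hCg z.2)
  have hSnP : IsProbabilityMeasure (sampleDist n P) := by
    unfold sampleDist; infer_instance
  have key : ∀ m : ℝ, 1 - α ≤ (sampleDist n P {z | φ m z = 0}).toReal := by
    intro m
    set d : ℝ := m - (gp - gm) with hdDef
    set T : ℕ → ℝ × ℝ → ℝ × ℝ := fun k z => (z.1 + bump c d k z.2, z.2) with hTdef
    have hT : ∀ k, Measurable (T k) :=
      fun k => (measurable_fst.add
        ((bump_measurable c d k).comp measurable_snd)).prodMk measurable_snd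
    have hbint : ∀ k, Integrable (fun z : ℝ × ℝ => bump c d k z.2)
        (P : Measure (ℝ × ℝ)) :=
      fun k => integrable_of_abs_le
        ((bump_measurable c d k).comp measurable_snd).aestronglyMeasurable |d|
        (fun z => bump_abs_le c d k z.2)
    have hQprob : ∀ k, IsProbabilityMeasure ((P : Measure (ℝ × ℝ)).map (T k)) :=
      fun k => Measure.isProbabilityMeasure_map (hT k).aemeasurable
    set Q : ℕ → ProbabilityMeasure (ℝ × ℝ) :=
      fun k => ⟨(P : Measure (ℝ × ℝ)).map (T k), hQprob k⟩ with hQdef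
    have hjump : ∀ k, JumpFun c (fun x => g x + bump c d k x) (gp + d) gm := by
      intro k
      refine ⟨⟨Cg + |d|, fun x => (abs_add_le _ _).trans
          (add_le_add (hCg x) (bump_abs_le c d k x))⟩,
        fun x hx => (hg.2.1 x hx).add (bump_continuousAt c d k hx),
        hg.2.2.1.add (bump_tendsto_right c d k), ?_⟩
      simpa using hg.2.2.2.add (bump_tendsto_left c d k)
    have hxcont : ∀ k, XCont c (Q k) f := by
      intro k
      refine ⟨hf.1, hf.2.1, ?_, hf.2.2.2⟩
      show ((P : Measure (ℝ × ℝ)).map (T k)).map Prod.snd = _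
      rw [Measure.map_map measurable_snd (hT k)]
      have h2 : Prod.snd ∘ T k = Prod.snd := rfl
      rw [h2, hf.2.2.1]
    have hcond : ∀ k, CondMeanEq (Q k) (fun x => g x + bump c d k x) := by
      intro k
      constructor
      · show Integrable _ ((P : Measure (ℝ × ℝ)).map (T k))
        refine (integrable_map_measure measurable_fst.aestronglyMeasurable
          (hT k).aemeasurable).2 ?_
        exact hcm.1.add (hbint k)
      · intro B hB
        have hS : MeasurableSet {z : ℝ × ℝ | z.2 ∈ B} := measurable_snd hB
        have hpre : T k ⁻¹' {z : ℝ × ℝ | z.2 ∈ B} = {z : ℝ × ℝ | z.2 ∈ B} := rfl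
        show (∫ z in {z : ℝ × ℝ | z.2 ∈ B}, z.1 ∂((P : Measure (ℝ × ℝ)).map (T k)))
          = ∫ z in {z : ℝ × ℝ | z.2 ∈ B}, (g z.2 + bump c d k z.2)
              ∂((P : Measure (ℝ × ℝ)).map (T k))
        rw [setIntegral_map hS measurable_fst.aestronglyMeasurable (hT k).aemeasurable,
          setIntegral_map (f := fun z : ℝ × ℝ => g z.2 + bump c d k z.2) hS
            ((hgmeas.comp measurable_snd).add
              ((bump_measurable c d k).comp measurable_snd)).aestronglyMeasurable
            (hT k).aemeasurable, hpre]
        show (∫ z in {z : ℝ × ℝ | z.2 ∈ B}, (z.1 + bump c d k z.2)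
            ∂(P : Measure (ℝ × ℝ)))
          = ∫ z in {z : ℝ × ℝ | z.2 ∈ B}, (g z.2 + bump c d k z.2)
              ∂(P : Measure (ℝ × ℝ))
        rw [integral_add hcm.1.integrableOn (hbint k).integrableOn,
          integral_add hgint.integrableOn (hbint k).integrableOn, hcm.2 B hB]
    have hQmem : ∀ k, MemRDD c (Q k) :=
      fun k => ⟨⟨f, hxcont k⟩, _, _, _, hjump k, hcond k⟩
    have hμQ : ∀ k, μ (Q k) = m := by
      intro k
      rw [hμ (Q k) _ _ _ (hQmem k) (hjump k) (hcond k), hdDef]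
      ring
    have hQlow : ∀ k, 1 - α ≤ (sampleDist n (Q k) {z | φ m z = 0}).toReal := by
      intro k
      have h := hlow (Q k) (hQmem k)
      rwa [hμQ k] at h
    set ψ : (Fin n → ℝ × ℝ) → ℝ := fun z => 1 - φ m z with hψdef
    have hψmeas : Measurable ψ := measurable_const.sub (hφ m).1
    have hA : MeasurableSet {z : Fin n → ℝ × ℝ | φ m z = 0} :=
      (hφ m).1 (measurableSet_singleton 0)
    have hψeq : ψ = Set.indicator {z : Fin n → ℝ × ℝ | φ m z = 0} 1 := by
      funext z
      rcases (hφ m).2 z with h | h <;>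
        simp [hψdef, Set.indicator_apply, Set.mem_setOf_eq, h]
    have hgen : ∀ ν : Measure (Fin n → ℝ × ℝ),
        ∫ z, ψ z ∂ν = (ν {z | φ m z = 0}).toReal := by
      intro ν
      rw [hψeq]
      exact integral_indicator_one hA
    have hFmeas : ∀ k, Measurable (fun z : Fin n → ℝ × ℝ => fun i => T k (z i)) :=
      fun k => measurable_pi_lambda _ fun i => (hT k).comp (measurable_pi_apply i)
    have hcomp : ∀ k, (sampleDist n (Q k) {z | φ m z = 0}).toReal
        = ∫ z, ψ (fun i => T k (z i)) ∂(sampleDist n P) := by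
      intro k
      have hmapn : sampleDist n (Q k)
          = (sampleDist n P).map (fun z i => T k (z i)) := by
        show (Measure.pi fun _ : Fin n => (P : Measure (ℝ × ℝ)).map (T k)) = _
        exact pi_map_map _ _ (hT k)
      rw [hmapn, ← hgen, integral_map (hFmeas k).aemeasurable
        hψmeas.aestronglyMeasurable]
    have hptwise : ∀ z : Fin n → ℝ × ℝ,
        ∀ᶠ k : ℕ in atTop, (fun i => T k (z i)) = z := by
      intro z
      have h1 : ∀ i, ∀ᶠ k : ℕ in atTop, T k (z i) = z i := by
        intro i
        filter_upwards [bump_eventually_zero c d (z i).2] with k hk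
        simp [hTdef, hk]
      filter_upwards [Filter.eventually_all.2 h1] with k hk
      funext i; exact hk i
    have htend : Tendsto (fun k => ∫ z, ψ (fun i => T k (z i)) ∂(sampleDist n P))
        atTop (nhds (∫ z, ψ z ∂(sampleDist n P))) := by
      refine tendsto_integral_of_dominated_convergence (bound := fun _ => (2:ℝ))
        (fun k => (hψmeas.comp (hFmeas k)).aestronglyMeasurable)
        (integrable_const 2) (fun k => ae_of_all _ fun z => ?_)
        (ae_of_all _ fun z => ?_)
      · rcases (hφ m).2 (fun i => T k (z i)) with h | h <;>
          simp [hψdef, h] <;> norm_num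
      · exact tendsto_const_nhds.congr'
          ((hptwise z).mono fun k hk => (congrArg ψ hk).symm)
    have hlim : 1 - α ≤ ∫ z, ψ z ∂(sampleDist n P) :=
      ge_of_tendsto' htend (fun k => by rw [← hcomp k]; exact hQlow k)
    rwa [hgen] at hlim
  -- conclude: with probability ≥ 1 - α, infinitely many naturals lie in the set
  set A : ℕ → Set (Fin n → ℝ × ℝ) := fun j => {z | φ (j : ℝ) z = 0} with hAdef
  have hAm : ∀ j, MeasurableSet (A j) := fun j => (hφ j).1 (measurableSet_singleton 0)
  set B : ℕ → Set (Fin n → ℝ × ℝ) := fun J => ⋃ j, ⋃ (_ : J ≤ j), A j with hBdef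
  have hBm : ∀ J, MeasurableSet (B J) :=
    fun J => MeasurableSet.iUnion fun j => MeasurableSet.iUnion fun _ => hAm j
  have hBanti : Antitone B := by
    intro J J' h z hz
    obtain ⟨j, hj, hzj⟩ := Set.mem_iUnion₂.1 hz
    exact Set.mem_iUnion₂.2 ⟨j, le_trans h hj, hzj⟩
  have hBlow : ∀ J, ENNReal.ofReal (1 - α) ≤ sampleDist n P (B J) := by
    intro J
    have h1 : ENNReal.ofReal (1 - α) ≤ sampleDist n P (A J) := by
      rw [← ENNReal.ofReal_toReal (measure_ne_top (sampleDist n P) (A J))]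
      exact ENNReal.ofReal_le_ofReal (key J)
    exact h1.trans (measure_mono fun z hz => Set.mem_iUnion₂.2 ⟨J, le_rfl, hz⟩)
  have hInter : sampleDist n P (⋂ J, B J) = ⨅ J, sampleDist n P (B J) :=
    hBanti.measure_iInter (fun J => (hBm J).nullMeasurableSet)
      ⟨0, measure_ne_top _ _⟩
  have hpos : 0 < sampleDist n P (⋂ J, B J) := by
    rw [hInter]
    exact lt_of_lt_of_le (ENNReal.ofReal_pos.2 hα) (le_iInf hBlow)
  refine lt_of_lt_of_le hpos (measure_mono ?_)
  intro z hz
  simp only [Set.mem_iInter] at hz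
  intro hbd
  rcases isBounded_iff_forall_norm_le.1 hbd with ⟨C, hC⟩
  obtain ⟨j, hj, hzj⟩ := Set.mem_iUnion₂.1 (hz (⌈C⌉₊ + 1))
  have h1 : ‖(j : ℝ)‖ ≤ C := hC _ hzj
  have h2 : ((⌈C⌉₊ : ℝ) + 1) ≤ (j : ℝ) := by exact_mod_cast hj
  rw [Real.norm_eq_abs, abs_of_nonneg (Nat.cast_nonneg j)] at h1
  linarith [Nat.le_ceil C]
end
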